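/- arXiv:0901.2503 — 2 statements merged into one kernel-verified Lean document; each statement's English description precedes it below -/
import Mathlib

section
/- Let (ε_k)_{k∈ℤ} be a strong H-white noise and let (a_j)_{j∈ℕ} be bounded linear operators on H with Σ_{j=0}^∞ ‖a_j‖_∞ < ∞. Let X_k = Σ_{j=0}^∞ a_j(ε_{k−j}) and S_n = Σ_{k=1}^n X_k. Then for every δ > 0, (n^{1/4} / (log n)^{1/2+δ}) · ‖S_n/n‖ → 0 almost surely as n → ∞. -/
open MeasureTheory ProbabilityTheory Filter Topology
open scoped InnerProductSpace

noncomputable section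

variable {Ω : Type*} [MeasureSpace Ω] [IsProbabilityMeasure (ℙ : Measure Ω)]
variable {H : Type*} [NormedAddCommGroup H] [InnerProductSpace ℝ H] [CompleteSpace H]
  [SecondCountableTopology H] [MeasurableSpace H] [BorelSpace H]

/-- A strong `H`-white noise: a sequence of i.i.d. centered random elements of `H`
with finite strong second moment. -/
structure IsStrongWhiteNoise (ε : ℤ → Ω → H) : Prop where
  meas : ∀ k, Measurable (ε k)
  indep : iIndepFun ε ℙ
  ident : ∀ k, Measure.map (ε k) ℙ = Measure.map (ε 0) ℙ
  centered : ∫ ω, ε 0 ω ∂ℙ = 0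
  sqInt : MemLp (ε 0) 2 ℙ

open scoped ENNReal

/-!
The innovations are independent and centred, so for every shift `j` the sums
`∑ l ∈ s, ε (l - j)` are sums of orthogonal vectors of `L²`; Minkowski's inequality over `j`
and Fatou's lemma then give `‖∑ l ∈ s, X l‖_{L²} ≤ √#s · ∑ ‖a j‖ · ‖ε 0‖_{L²}`.
Along the squares `n = r²`, Chebyshev's inequality and Borel–Cantelli turn this into
`‖S_{r²}‖ = o(r^{3/2} (log r)^{1/2+δ})` almost surely, because `∑ 1 / (r (log r)^{1+2δ}) < ∞`.
The block sums `∑_{r² ≤ k < (r+1)²} ‖X k‖` have `L²` norm `O(r)` and obey the same bound, and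
they control `S_n` between consecutive squares.
-/

theorem Real.summable_inv_nat_mul_log_rpow {q : ℝ} (hq : 1 < q) :
    Summable fun n : ℕ => ((n : ℝ) * Real.log n ^ q)⁻¹ := by
  refine (summable_condensed_iff_of_eventually_nonneg
    (Eventually.of_forall fun n => by positivity) ?_).mp ?_
  · filter_upwards [eventually_ge_atTop 2] with n hn
    have hn' : (2 : ℝ) ≤ n := by exact_mod_cast hn
    have hlog : 0 < Real.log n := Real.log_pos (by linarith)
    push_cast
    gcongr <;> linarith
  · have hcond (k : ℕ) : (2 : ℝ) ^ k * (((2 ^ k : ℕ) : ℝ) * Real.log ((2 ^ k : ℕ) : ℝ) ^ q)⁻¹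
        = (Real.log 2 ^ q)⁻¹ * ((k : ℝ) ^ q)⁻¹ := by
      rw [Nat.cast_pow, Nat.cast_ofNat, Real.log_pow, mul_comm (k : ℝ),
        Real.mul_rpow (Real.log_nonneg one_le_two) k.cast_nonneg, mul_inv, ← mul_assoc,
        mul_inv_cancel₀ (by positivity), one_mul, mul_inv]
    simp_rw [hcond]
    exact (Real.summable_nat_rpow_inv.mpr hq).mul_left _

section Rate

def partialSumRate (δ : ℝ) (n : ℕ) : ℝ := (n : ℝ) ^ ((3 : ℝ) / 4) * Real.log n ^ ((1 : ℝ) / 2 + δ)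

variable {δ : ℝ}

theorem partialSumRate_nonneg (n : ℕ) : 0 ≤ partialSumRate δ n :=
  mul_nonneg (by positivity) (Real.rpow_nonneg (Real.log_natCast_nonneg n) _)

theorem partialSumRate_pos {n : ℕ} (hn : 2 ≤ n) : 0 < partialSumRate δ n := by
  have hlog : 0 < Real.log n := Real.log_pos (by exact_mod_cast hn)
  unfold partialSumRate
  positivity

theorem monotone_partialSumRate (hδ : 0 ≤ (1 : ℝ) / 2 + δ) : Monotone (partialSumRate δ) := by
  intro m n hmn
  rcases Nat.eq_zero_or_pos m with rfl | hm
  · simpa [partialSumRate] using partialSumRate_nonneg n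
  unfold partialSumRate
  gcongr

theorem rpow_div_mul_inv_mul_eq_div_partialSumRate (n : ℕ) (x : ℝ) :
    (n : ℝ) ^ ((1 : ℝ) / 4) / Real.log n ^ ((1 : ℝ) / 2 + δ) * ((n : ℝ)⁻¹ * x)
      = x / partialSumRate δ n := by
  have hn : (n : ℝ) ^ ((1 : ℝ) / 4) * (n : ℝ)⁻¹ = ((n : ℝ) ^ ((3 : ℝ) / 4))⁻¹ := by
    rcases Nat.eq_zero_or_pos n with rfl | hn
    · simp
    have hn' : (0 : ℝ) < n := by exact_mod_cast hn
    rw [← Real.rpow_neg_one, ← Real.rpow_add hn', ← Real.rpow_neg hn'.le]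
    norm_num
  rw [partialSumRate, div_eq_mul_inv x, mul_inv, ← hn]
  ring

theorem sq_div_partialSumRate_sq_le (hδ : 0 ≤ (1 : ℝ) / 2 + δ) {r : ℕ} (hr : 2 ≤ r) :
    ((r : ℝ) / partialSumRate δ (r ^ 2)) ^ 2 ≤ ((r : ℝ) * Real.log r ^ (1 + 2 * δ))⁻¹ := by
  have hr' : (2 : ℝ) ≤ r := by exact_mod_cast hr
  have hlog : 0 < Real.log r := Real.log_pos (by linarith)
  have hrate : partialSumRate δ (r ^ 2)
      = (r : ℝ) ^ ((3 : ℝ) / 2) * (2 * Real.log r) ^ ((1 : ℝ) / 2 + δ) := by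
    rw [partialSumRate, Nat.cast_pow, Real.log_pow, ← Real.rpow_natCast (r : ℝ) 2,
      ← Real.rpow_mul (by linarith)]
    norm_num
  have hpow : ((r : ℝ) ^ ((3 : ℝ) / 2)) ^ 2 = (r : ℝ) ^ 3 := by
    rw [← Real.rpow_mul_natCast (by linarith), ← Real.rpow_natCast]
    norm_num
  have hlogpow : (Real.log r ^ ((1 : ℝ) / 2 + δ)) ^ 2 = Real.log r ^ (1 + 2 * δ) := by
    rw [← Real.rpow_mul_natCast hlog.le]
    ring_nf
  calc ((r : ℝ) / partialSumRate δ (r ^ 2)) ^ 2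
      ≤ ((r : ℝ) / ((r : ℝ) ^ ((3 : ℝ) / 2) * Real.log r ^ ((1 : ℝ) / 2 + δ))) ^ 2 := by
        rw [hrate]
        gcongr
        linarith
    _ = ((r : ℝ) * Real.log r ^ (1 + 2 * δ))⁻¹ := by
        rw [div_pow, mul_pow, hpow, hlogpow]
        field_simp

theorem summable_div_partialSumRate_sq (hδ : 0 < δ) :
    Summable fun r : ℕ => ((r : ℝ) / partialSumRate δ (r ^ 2)) ^ 2 := by
  refine (Real.summable_inv_nat_mul_log_rpow (q := 1 + 2 * δ) (by linarith))
    |>.of_norm_bounded_eventually_nat ?_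
  filter_upwards [eventually_ge_atTop 2] with r hr
  rw [Real.norm_of_nonneg (sq_nonneg _)]
  exact sq_div_partialSumRate_sq_le (by linarith) hr

theorem summable_two_mul_add_one_div_partialSumRate_sq (hδ : 0 < δ) :
    Summable fun r : ℕ => ((2 * r + 1 : ℝ) / partialSumRate δ (r ^ 2)) ^ 2 :=
  ((summable_div_partialSumRate_sq hδ).mul_left 9).of_norm_bounded_eventually_nat <| by
    filter_upwards [eventually_ge_atTop 1] with r hr
    have hr' : (1 : ℝ) ≤ r := by exact_mod_cast hr
    rw [Real.norm_of_nonneg (sq_nonneg _), show (9 : ℝ) * ((r : ℝ) / partialSumRate δ (r ^ 2)) ^ 2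
      = (3 * r / partialSumRate δ (r ^ 2)) ^ 2 by ring]
    exact pow_le_pow_left₀ (div_nonneg (by positivity) (partialSumRate_nonneg _))
      (div_le_div_of_nonneg_right (by linarith) (partialSumRate_nonneg _)) 2

end Rate

section Moments

variable {α E : Type*} {mα : MeasurableSpace α} {μ : Measure α}
  [NormedAddCommGroup E] [InnerProductSpace ℝ E]

theorem MeasureTheory.MemLp.integrable_inner {f g : α → E} (hf : MemLp f 2 μ)
    (hg : MemLp g 2 μ) :
    Integrable (fun ω => ⟪f ω, g ω⟫_ℝ) μ :=
  (L2.integrable_inner (𝕜 := ℝ) (hf.toLp f) (hg.toLp g)).congr <| by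
    filter_upwards [hf.coeFn_toLp, hg.coeFn_toLp] with ω hfω hgω
    rw [hfω, hgω]

theorem MeasureTheory.MemLp.eLpNorm_two_eq_sqrt {F : Type*} [NormedAddCommGroup F] {f : α → F}
    (hf : MemLp f 2 μ) :
    eLpNorm f 2 μ = ENNReal.ofReal √(∫ ω, ‖f ω‖ ^ 2 ∂μ) := by
  rw [hf.eLpNorm_eq_integral_rpow_norm two_ne_zero ENNReal.ofNat_ne_top, Real.sqrt_eq_rpow]
  norm_num

theorem integral_norm_sum_sq_of_orthogonal {ι : Type*} (s : Finset ι) {f : ι → α → E}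
    (hf : ∀ i, MemLp (f i) 2 μ)
    (horth : ∀ i j, i ≠ j → ∫ ω, ⟪f i ω, f j ω⟫_ℝ ∂μ = 0) :
    ∫ ω, ‖∑ i ∈ s, f i ω‖ ^ 2 ∂μ = ∑ i ∈ s, ∫ ω, ‖f i ω‖ ^ 2 ∂μ := by
  have hint i j : Integrable (fun ω => ⟪f i ω, f j ω⟫_ℝ) μ := (hf i).integrable_inner (hf j)
  calc ∫ ω, ‖∑ i ∈ s, f i ω‖ ^ 2 ∂μ
      = ∫ ω, ∑ i ∈ s, ∑ j ∈ s, ⟪f i ω, f j ω⟫_ℝ ∂μ := by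
        simp_rw [← real_inner_self_eq_norm_sq, sum_inner, inner_sum]
    _ = ∑ i ∈ s, ∑ j ∈ s, ∫ ω, ⟪f i ω, f j ω⟫_ℝ ∂μ := by
        rw [integral_finsetSum _ fun i _ => integrable_finsetSum _ fun j _ => hint i j]
        exact Finset.sum_congr rfl fun i _ => integral_finsetSum _ fun j _ => hint i j
    _ = ∑ i ∈ s, ∫ ω, ⟪f i ω, f i ω⟫_ℝ ∂μ :=
        Finset.sum_congr rfl fun i hi =>
          Finset.sum_eq_single_of_mem i hi fun j _ hji => horth i j hji.symm
    _ = ∑ i ∈ s, ∫ ω, ‖f i ω‖ ^ 2 ∂μ := by simp_rw [real_inner_self_eq_norm_sq]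

theorem ProbabilityTheory.IndepFun.integral_inner_eq_zero
    [CompleteSpace E] [MeasurableSpace E] [BorelSpace E]
    {f g : α → E} (hfg : IndepFun f g μ) (hf : Integrable f μ) (hg : Integrable g μ)
    (hf0 : ∫ ω, f ω ∂μ = 0) :
    ∫ ω, ⟪f ω, g ω⟫_ℝ ∂μ = 0 :=
  (hfg.integral_bilin hf hg (innerSL ℝ)).trans (by simp [hf0])

-- For `t = 0` the event is empty, since `‖Y ω‖ / 0 = 0 < c`.
theorem meas_le_norm_div_le {F : Type*} [NormedAddCommGroup F] {Y : α → F}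
    (hY : AEStronglyMeasurable Y μ) {s t c : ℝ} (hYs : eLpNorm Y 2 μ ≤ ENNReal.ofReal s)
    (ht : 0 ≤ t) (hc : 0 < c) :
    μ {ω | c ≤ ‖Y ω‖ / t} ≤ ENNReal.ofReal ((s / (c * t)) ^ 2) := by
  rcases ht.eq_or_lt with rfl | ht
  · simp [not_le.mpr hc]
  have hct : 0 < c * t := mul_pos hc ht
  calc μ {ω | c ≤ ‖Y ω‖ / t}
      ≤ μ {ω | ENNReal.ofReal (c * t) ≤ ‖Y ω‖ₑ} := by
        refine measure_mono fun ω hω => ?_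
        rw [Set.mem_ofPred_eq, le_div_iff₀ ht] at hω
        rw [Set.mem_ofPred_eq, ← ofReal_norm]
        exact ENNReal.ofReal_le_ofReal hω
    _ ≤ (ENNReal.ofReal (c * t))⁻¹ ^ (2 : ℝ) * eLpNorm Y 2 μ ^ (2 : ℝ) := by
        simpa using meas_ge_le_mul_pow_eLpNorm_enorm μ two_ne_zero ENNReal.ofNat_ne_top hY
          (ENNReal.ofReal_pos.mpr hct).ne' (by simp)
    _ ≤ (ENNReal.ofReal (c * t))⁻¹ ^ (2 : ℝ) * ENNReal.ofReal s ^ (2 : ℝ) := by gcongr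
    _ ≤ ENNReal.ofReal ((s / (c * t)) ^ 2) := by
        rcases le_total s 0 with hs | hs
        · simp [ENNReal.ofReal_of_nonpos hs]
        rw [← ENNReal.mul_rpow_of_nonneg _ _ zero_le_two, ← ENNReal.ofReal_inv_of_pos hct,
          ← ENNReal.ofReal_mul (by positivity), ENNReal.rpow_two,
          ← ENNReal.ofReal_pow (by positivity), inv_mul_eq_div]

theorem ae_tendsto_norm_div_of_summable_sq {F : Type*} [NormedAddCommGroup F] {Y : ℕ → α → F}
    (hY : ∀ k, AEStronglyMeasurable (Y k) μ) {s t : ℕ → ℝ}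
    (hYs : ∀ k, eLpNorm (Y k) 2 μ ≤ ENNReal.ofReal (s k)) (ht : ∀ k, 0 ≤ t k)
    (hst : Summable fun k => (s k / t k) ^ 2) :
    ∀ᵐ ω ∂μ, Tendsto (fun k => ‖Y k ω‖ / t k) atTop (𝓝 0) := by
  have hevent (q : ℕ) : ∀ᵐ ω ∂μ, ∀ᶠ k in atTop, ‖Y k ω‖ / t k < 1 / (q + 1) := by
    have hc : (0 : ℝ) < 1 / (q + 1) := by positivity
    have hsum : Summable fun k => (s k / (1 / (q + 1) * t k)) ^ 2 :=
      (hst.mul_left (((q : ℝ) + 1) ^ 2)).congr fun k => by field_simp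
    have hfin : ∑' k, μ {ω | 1 / (q + 1) ≤ ‖Y k ω‖ / t k} ≠ ∞ := by
      refine ne_top_of_le_ne_top ?_
        (ENNReal.tsum_le_tsum fun k => meas_le_norm_div_le (hY k) (hYs k) (ht k) hc)
      rw [← ENNReal.ofReal_tsum_of_nonneg (fun k => sq_nonneg _) hsum]
      exact ENNReal.ofReal_ne_top
    filter_upwards [ae_eventually_notMem hfin] with ω hω
    exact hω.mono fun k hk => not_le.mp hk
  filter_upwards [ae_all_iff.mpr hevent] with ω hω
  refine tendsto_order.2 ⟨fun a ha => Eventually.of_forall fun k =>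
    ha.trans_le (div_nonneg (norm_nonneg _) (ht k)), fun b hb => ?_⟩
  obtain ⟨q, hq⟩ := exists_nat_one_div_lt hb
  exact (hω q).mono fun k hk => hk.trans hq

end Moments

theorem tendsto_norm_sum_div_of_squares {F : Type*} [SeminormedAddCommGroup F] {x : ℕ → F}
    {g : ℕ → ℝ} (hg : Monotone g) (hg_pos : ∀ᶠ n in atTop, 0 < g n)
    (hsq : Tendsto (fun r => ‖∑ k ∈ Finset.range (r ^ 2), x k‖ / g (r ^ 2)) atTop (𝓝 0))
    (hblock : Tendsto (fun r => (∑ k ∈ Finset.Ico (r ^ 2) ((r + 1) ^ 2), ‖x k‖) / g (r ^ 2))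
      atTop (𝓝 0)) :
    Tendsto (fun n => ‖∑ k ∈ Finset.range n, x k‖ / g n) atTop (𝓝 0) := by
  have hsqrt : Tendsto Nat.sqrt atTop atTop :=
    tendsto_atTop_atTop.2 fun b => ⟨b ^ 2, fun n hn => Nat.le_sqrt'.2 hn⟩
  have hbound := (hsq.add hblock).comp hsqrt
  rw [add_zero] at hbound
  refine tendsto_of_tendsto_of_tendsto_of_le_of_le' tendsto_const_nhds hbound ?_ ?_
  · filter_upwards [hg_pos] with n hn using div_nonneg (norm_nonneg _) hn.le
  filter_upwards [hsqrt.eventually ((tendsto_pow_atTop two_ne_zero).eventually hg_pos)] with n hn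
  set r := Nat.sqrt n
  have hrn : r ^ 2 ≤ n := Nat.sqrt_le' n
  have hsplit : ‖∑ k ∈ Finset.range n, x k‖
      ≤ ‖∑ k ∈ Finset.range (r ^ 2), x k‖ + ∑ k ∈ Finset.Ico (r ^ 2) ((r + 1) ^ 2), ‖x k‖ := by
    rw [← Finset.sum_range_add_sum_Ico _ hrn]
    refine (norm_add_le _ _).trans (add_le_add_right ((norm_sum_le _ _).trans ?_) _)
    exact Finset.sum_le_sum_of_subset_of_nonneg
      (Finset.Ico_subset_Ico le_rfl (Nat.lt_succ_sqrt' n).le) fun _ _ _ => norm_nonneg _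
  calc ‖∑ k ∈ Finset.range n, x k‖ / g n
      ≤ ‖∑ k ∈ Finset.range n, x k‖ / g (r ^ 2) :=
        div_le_div_of_nonneg_left (norm_nonneg _) hn (hg hrn)
    _ ≤ _ := by
        rw [Function.comp_apply, ← add_div]
        exact div_le_div_of_nonneg_right hsplit hn.le

namespace IsStrongWhiteNoise

variable {Ω H : Type*} [MeasureSpace Ω] [NormedAddCommGroup H] [InnerProductSpace ℝ H]
  [MeasurableSpace H] {ε : ℤ → Ω → H}

theorem identDistrib (hε : IsStrongWhiteNoise ε) (k : ℤ) : IdentDistrib (ε k) (ε 0) ℙ ℙ :=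
  ⟨(hε.meas k).aemeasurable, (hε.meas 0).aemeasurable, hε.ident k⟩

variable [BorelSpace H]

theorem memLp (hε : IsStrongWhiteNoise ε) (k : ℤ) : MemLp (ε k) 2 ℙ :=
  (hε.identDistrib k).symm.memLp_snd hε.sqInt

theorem integral_eq_zero (hε : IsStrongWhiteNoise ε) (k : ℤ) : ∫ ω, ε k ω ∂ℙ = 0 :=
  (hε.identDistrib k).integral_eq.trans hε.centered

theorem integral_norm_sq (hε : IsStrongWhiteNoise ε) (k : ℤ) :
    ∫ ω, ‖ε k ω‖ ^ 2 ∂ℙ = ∫ ω, ‖ε 0 ω‖ ^ 2 ∂ℙ :=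
  ((hε.identDistrib k).comp (measurable_norm.pow_const 2)).integral_eq

variable [IsFiniteMeasure (ℙ : Measure Ω)] [CompleteSpace H]

theorem integral_norm_sum_sq (hε : IsStrongWhiteNoise ε) {ι : Type*}
    (s : Finset ι) {g : ι → ℤ} (hg : Function.Injective g) :
    ∫ ω, ‖∑ i ∈ s, ε (g i) ω‖ ^ 2 ∂ℙ = s.card * ∫ ω, ‖ε 0 ω‖ ^ 2 ∂ℙ := by
  rw [integral_norm_sum_sq_of_orthogonal s (fun i => hε.memLp (g i)) fun i j hij =>
    ((hε.indep.indepFun (hg.ne hij)).integral_inner_eq_zero ((hε.memLp _).integrable one_le_two)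
      ((hε.memLp _).integrable one_le_two) (hε.integral_eq_zero _))]
  simp [hε.integral_norm_sq]

theorem eLpNorm_sum (hε : IsStrongWhiteNoise ε) {ι : Type*}
    (s : Finset ι) {g : ι → ℤ} (hg : Function.Injective g) :
    eLpNorm (fun ω => ∑ i ∈ s, ε (g i) ω) 2 ℙ = ENNReal.ofReal √s.card * eLpNorm (ε 0) 2 ℙ := by
  rw [(memLp_finsetSum s fun i _ => hε.memLp (g i)).eLpNorm_two_eq_sqrt,
    (hε.memLp 0).eLpNorm_two_eq_sqrt, hε.integral_norm_sum_sq s hg,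
    Real.sqrt_mul s.card.cast_nonneg, ENNReal.ofReal_mul (Real.sqrt_nonneg _)]

end IsStrongWhiteNoise

section LinearProcess

variable {Ω H : Type*} [MeasureSpace Ω] [NormedAddCommGroup H] [InnerProductSpace ℝ H]
  {ε : ℤ → Ω → H} {a : ℕ → H →L[ℝ] H} {X : ℤ → Ω → H}

def IsLinearProcess (ε : ℤ → Ω → H) (a : ℕ → H →L[ℝ] H) (X : ℤ → Ω → H) : Prop :=
  ∀ k : ℤ, ∀ᵐ ω ∂ℙ,
    Tendsto (fun m : ℕ => ∑ j ∈ Finset.range (m + 1), a j (ε (k - j) ω)) atTop (𝓝 (X k ω))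

theorem IsLinearProcess.aestronglyMeasurable (hε : ∀ k, AEStronglyMeasurable (ε k) ℙ)
    (hX : IsLinearProcess ε a X) (k : ℤ) : AEStronglyMeasurable (X k) ℙ :=
  aestronglyMeasurable_of_tendsto_ae atTop
    (fun _ => Finset.aestronglyMeasurable_fun_sum _ fun j _ =>
      (a j).continuous.comp_aestronglyMeasurable (hε _)) (hX k)

variable [MeasurableSpace H] [SecondCountableTopology H] [BorelSpace H]
  [IsFiniteMeasure (ℙ : Measure Ω)] [CompleteSpace H]

theorem IsStrongWhiteNoise.eLpNorm_sum_sum_le (hε : IsStrongWhiteNoise ε) (a : ℕ → H →L[ℝ] H)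
    {ι : Type*} (s : Finset ι) {g : ι → ℤ} (hg : Function.Injective g) (J : Finset ℕ) :
    eLpNorm (fun ω => ∑ i ∈ s, ∑ j ∈ J, a j (ε (g i - j) ω)) 2 ℙ
      ≤ ENNReal.ofReal (√s.card * ∑ j ∈ J, ‖a j‖) * eLpNorm (ε 0) 2 ℙ := by
  have hswap : (fun ω => ∑ i ∈ s, ∑ j ∈ J, a j (ε (g i - j) ω))
      = ∑ j ∈ J, fun ω => a j (∑ i ∈ s, ε (g i - j) ω) := by
    funext ω
    simp only [Finset.sum_apply, map_sum]
    exact Finset.sum_comm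
  rw [hswap]
  calc _ ≤ ∑ j ∈ J, eLpNorm (fun ω => a j (∑ i ∈ s, ε (g i - j) ω)) 2 ℙ :=
        eLpNorm_sum_le (fun j _ => (a j).continuous.comp_aestronglyMeasurable
          (Finset.aestronglyMeasurable_fun_sum _ fun i _ => (hε.meas _).aestronglyMeasurable))
          one_le_two
    _ ≤ ∑ j ∈ J, ENNReal.ofReal ‖a j‖ * (ENNReal.ofReal √s.card * eLpNorm (ε 0) 2 ℙ) := by
        gcongr with j
        rw [← hε.eLpNorm_sum s ((sub_left_injective (b := (j : ℤ))).comp hg)]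
        exact eLpNorm_le_mul_eLpNorm_of_ae_le_mul
          (Eventually.of_forall fun ω => (a j).le_opNorm _) 2
    _ = _ := by
        rw [← Finset.sum_mul, ← ENNReal.ofReal_sum_of_nonneg fun j _ => norm_nonneg _, ← mul_assoc,
          ← ENNReal.ofReal_mul (Finset.sum_nonneg fun j _ => norm_nonneg _), mul_comm (∑ j ∈ J, _)]

theorem IsLinearProcess.eLpNorm_sum_le_sqrt_card (hε : IsStrongWhiteNoise ε)
    (ha : Summable fun j => ‖a j‖) (hX : IsLinearProcess ε a X) {ι : Type*} (s : Finset ι)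
    {g : ι → ℤ} (hg : Function.Injective g) :
    eLpNorm (fun ω => ∑ i ∈ s, X (g i) ω) 2 ℙ
      ≤ ENNReal.ofReal (√s.card * ∑' j, ‖a j‖) * eLpNorm (ε 0) 2 ℙ := by
  have hlim : ∀ᵐ ω ∂ℙ, Tendsto (fun m => ∑ i ∈ s, ∑ j ∈ Finset.range (m + 1), a j (ε (g i - j) ω))
      atTop (𝓝 (∑ i ∈ s, X (g i) ω)) := by
    filter_upwards [(eventually_all_finset s).mpr fun i _ => hX (g i)] with ω hω
    exact tendsto_finsetSum s hω
  refine (Lp.eLpNorm_lim_le_liminf_eLpNorm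
    (fun _ => Finset.aestronglyMeasurable_fun_sum _ fun i _ =>
      Finset.aestronglyMeasurable_fun_sum _ fun j _ => (a j).continuous.comp_aestronglyMeasurable
        (hε.meas _).aestronglyMeasurable) _ hlim).trans (liminf_le_of_frequently_le' ?_)
  refine Frequently.of_forall fun m => (hε.eLpNorm_sum_sum_le a s hg _).trans ?_
  gcongr
  exact ha.sum_le_tsum _ fun j _ => norm_nonneg _

theorem IsLinearProcess.eLpNorm_le (hε : IsStrongWhiteNoise ε) (ha : Summable fun j => ‖a j‖)
    (hX : IsLinearProcess ε a X) (k : ℤ) :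
    eLpNorm (X k) 2 ℙ ≤ ENNReal.ofReal (∑' j, ‖a j‖) * eLpNorm (ε 0) 2 ℙ := by
  have h := hX.eLpNorm_sum_le_sqrt_card hε ha {()} (g := fun _ => k)
    (Function.injective_of_subsingleton _)
  simp only [Finset.sum_singleton, Finset.card_singleton, Nat.cast_one, Real.sqrt_one,
    one_mul] at h
  exact h

theorem IsLinearProcess.eLpNorm_sum_norm_le_card (hε : IsStrongWhiteNoise ε)
    (ha : Summable fun j => ‖a j‖) (hX : IsLinearProcess ε a X) {ι : Type*} (s : Finset ι)
    (g : ι → ℤ) :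
    eLpNorm (fun ω => ∑ i ∈ s, ‖X (g i) ω‖) 2 ℙ
      ≤ ENNReal.ofReal (s.card * ∑' j, ‖a j‖) * eLpNorm (ε 0) 2 ℙ := by
  have hXm := hX.aestronglyMeasurable fun k => (hε.meas k).aestronglyMeasurable
  calc eLpNorm (fun ω => ∑ i ∈ s, ‖X (g i) ω‖) 2 ℙ
      ≤ ∑ i ∈ s, eLpNorm (fun ω => ‖X (g i) ω‖) 2 ℙ := by
        have h := eLpNorm_sum_le (μ := ℙ) (s := s) (f := fun i ω => ‖X (g i) ω‖)
          (fun i _ => (hXm (g i)).norm) one_le_two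
        rwa [Finset.sum_fn] at h
    _ ≤ ∑ i ∈ s, ENNReal.ofReal (∑' j, ‖a j‖) * eLpNorm (ε 0) 2 ℙ := by
        gcongr with i
        rw [eLpNorm_norm]
        exact hX.eLpNorm_le hε ha (g i)
    _ = _ := by
        rw [Finset.sum_const, nsmul_eq_mul, ← mul_assoc, ← ENNReal.ofReal_natCast,
          ← ENNReal.ofReal_mul s.card.cast_nonneg]

variable {δ : ℝ}

theorem IsLinearProcess.ae_tendsto_norm_sum_range_sq_div (hε : IsStrongWhiteNoise ε)
    (ha : Summable fun j => ‖a j‖) (hX : IsLinearProcess ε a X) (hδ : 0 < δ) :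
    ∀ᵐ ω ∂ℙ, Tendsto (fun r : ℕ =>
      ‖∑ k ∈ Finset.range (r ^ 2), X (k + 1) ω‖ / partialSumRate δ (r ^ 2)) atTop (𝓝 0) := by
  set σ := (eLpNorm (ε 0) 2 ℙ).toReal
  have hbound (r : ℕ) : eLpNorm (fun ω => ∑ k ∈ Finset.range (r ^ 2), X (k + 1) ω) 2 ℙ
      ≤ ENNReal.ofReal (r * (∑' j, ‖a j‖) * σ) := by
    have h := hX.eLpNorm_sum_le_sqrt_card hε ha (Finset.range (r ^ 2))
      (g := fun k : ℕ => (k : ℤ) + 1) fun _ _ hkl => by simpa using hkl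
    rwa [Finset.card_range, Nat.cast_pow, Real.sqrt_sq r.cast_nonneg,
      ← ENNReal.ofReal_toReal hε.sqInt.eLpNorm_ne_top,
      ← ENNReal.ofReal_mul (by positivity)] at h
  exact ae_tendsto_norm_div_of_summable_sq
    (fun r => Finset.aestronglyMeasurable_fun_sum _ fun k _ =>
      hX.aestronglyMeasurable (fun k => (hε.meas k).aestronglyMeasurable) _)
    hbound (fun r => partialSumRate_nonneg _)
    (((summable_div_partialSumRate_sq hδ).mul_left (((∑' j, ‖a j‖) * σ) ^ 2)).congr
      fun r => by ring)

theorem IsLinearProcess.ae_tendsto_sum_norm_Ico_sq_div (hε : IsStrongWhiteNoise ε)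
    (ha : Summable fun j => ‖a j‖) (hX : IsLinearProcess ε a X) (hδ : 0 < δ) :
    ∀ᵐ ω ∂ℙ, Tendsto (fun r : ℕ => (∑ k ∈ Finset.Ico (r ^ 2) ((r + 1) ^ 2), ‖X (k + 1) ω‖)
      / partialSumRate δ (r ^ 2)) atTop (𝓝 0) := by
  set σ := (eLpNorm (ε 0) 2 ℙ).toReal
  have hbound (r : ℕ) :
      eLpNorm (fun ω => ∑ k ∈ Finset.Ico (r ^ 2) ((r + 1) ^ 2), ‖X (k + 1) ω‖) 2 ℙ
        ≤ ENNReal.ofReal ((2 * r + 1) * (∑' j, ‖a j‖) * σ) := by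
    have h := hX.eLpNorm_sum_norm_le_card hε ha (Finset.Ico (r ^ 2) ((r + 1) ^ 2))
      fun k : ℕ => (k : ℤ) + 1
    rw [Nat.card_Ico, show (r + 1) ^ 2 - r ^ 2 = 2 * r + 1 from Nat.sub_eq_of_eq_add (by ring),
      ← ENNReal.ofReal_toReal hε.sqInt.eLpNorm_ne_top,
      ← ENNReal.ofReal_mul (by positivity)] at h
    exact_mod_cast h
  filter_upwards [ae_tendsto_norm_div_of_summable_sq
    (fun r => Finset.aestronglyMeasurable_fun_sum _ fun k _ =>
      (hX.aestronglyMeasurable (fun k => (hε.meas k).aestronglyMeasurable) _).norm)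
    hbound (fun r => partialSumRate_nonneg _)
    (((summable_two_mul_add_one_div_partialSumRate_sq hδ).mul_left
      (((∑' j, ‖a j‖) * σ) ^ 2)).congr fun r => by ring)] with ω hω
  simpa only [Real.norm_of_nonneg (Finset.sum_nonneg fun _ _ => norm_nonneg _)] using hω

end LinearProcess

theorem linear_process_mean_as_rate_general
    (ε : ℤ → Ω → H) (hε : IsStrongWhiteNoise ε)
    (a : ℕ → H →L[ℝ] H) (ha : Summable fun j : ℕ => ‖a j‖)
    (X : ℤ → Ω → H)
    (hX : ∀ k : ℤ, ∀ᵐ ω ∂ℙ,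
      Tendsto (fun m : ℕ => ∑ j ∈ Finset.range (m + 1), a j (ε (k - j) ω))
        atTop (𝓝 (X k ω)))
    (δ : ℝ) (hδ : 0 < δ) :
    ∀ᵐ ω ∂ℙ, Tendsto
      (fun n : ℕ =>
        ((n : ℝ) ^ ((1 : ℝ) / 4) / Real.log n ^ ((1 : ℝ) / 2 + δ)) *
          ‖(n : ℝ)⁻¹ • ∑ k ∈ Finset.range n, X (k + 1) ω‖)
      atTop (𝓝 0) := by
  have hX' : IsLinearProcess ε a X := hX
  filter_upwards [hX'.ae_tendsto_norm_sum_range_sq_div hε ha hδ,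
    hX'.ae_tendsto_sum_norm_Ico_sq_div hε ha hδ] with ω hsq hblock
  refine (tendsto_norm_sum_div_of_squares (monotone_partialSumRate (by linarith))
    ((eventually_ge_atTop 2).mono fun n => partialSumRate_pos) hsq hblock).congr fun n => ?_
  rw [norm_smul, Real.norm_of_nonneg (inv_nonneg.2 n.cast_nonneg),
    rpow_div_mul_inv_mul_eq_div_partialSumRate]

/-- almost sure rate for the empirical mean of a linear process:
for every `δ > 0`, `(n^{1/4}/(log n)^{1/2+δ}) ‖S_n/n‖ → 0` a.s. -/
theorem linear_process_mean_as_rate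
    (ε : ℤ → Ω → H) (hε : IsStrongWhiteNoise ε)
    (a : ℕ → H →L[ℝ] H) (ha : Summable fun j : ℕ => ‖a j‖)
    (X : ℤ → Ω → H) (hXmeas : ∀ k, Measurable (X k))
    (hX : ∀ k : ℤ, ∀ᵐ ω ∂ℙ,
      Tendsto (fun m : ℕ => ∑ j ∈ Finset.range (m + 1), a j (ε (k - j) ω))
        atTop (𝓝 (X k ω)))
    (δ : ℝ) (hδ : 0 < δ) :
    ∀ᵐ ω ∂ℙ, Tendsto
      (fun n : ℕ =>
        ((n : ℝ) ^ ((1 : ℝ) / 4) / Real.log n ^ ((1 : ℝ) / 2 + δ)) *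
          ‖(n : ℝ)⁻¹ • ∑ k ∈ Finset.range n, X (k + 1) ω‖)
      atTop (𝓝 0) :=
  linear_process_mean_as_rate_general ε hε a ha X hX δ hδ
end
end

section
/- Let Γ be a compact, self-adjoint, positive, injective bounded operator on H with orthonormal basis (e_l)_{l∈ℕ} of eigenvectors, Γ e_l = λ_l e_l, λ_l > 0, and let (α_n) be a sequence of positive real numbers decreasing to 0. Then for every x in the range of Γ, the Tikhonov regularized inverse satisfies: for each n the series Σ_{l=0}^∞ (λ_l/(λ_l² + α_n)) ⟨x, e_l⟩ e_l converges in H, and its sum tends to Γ^{-1}x as n → ∞. -/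
open Filter Topology
open scoped InnerProductSpace ENNReal

/-!
Self-adjointness gives `⟪Γ y, e l⟫ = λ_l ⟪y, e l⟫`, so the `l`-th coefficient of the regularized
inverse is `c_n(l) ⟪y, e l⟫` with the filter factor `c_n(l) = λ_l² / (λ_l² + α_n) ∈ [0, 1]`, which
tends to `1` for each fixed `l`. By Parseval,
`‖Σ c_n(l) ⟪y, e l⟫ e l - y‖² = Σ |c_n(l) - 1|² ⟪y, e l⟫²`,
and this tends to `0` by dominated convergence against `4 Σ ⟪y, e l⟫² = 4 ‖y‖²`.
-/

theorem Memℓp.mul_of_forall_norm_le {ι R : Type*} [NormedRing R] {p : ℝ≥0∞} {f : ι → R}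
    (hf : Memℓp f p) {c : ι → R} {C : ℝ} (hc : ∀ i, ‖c i‖ ≤ C) :
    Memℓp (fun i => c i * f i) p :=
  (hf.norm.const_mul C).mono fun i =>
    (norm_mul_le _ _).trans (mul_le_mul_of_nonneg_right (hc i) (norm_nonneg _))

theorem lp.hasSum_norm_sq {ι : Type*} {E : ι → Type*} [∀ i, NormedAddCommGroup (E i)]
    (f : lp E 2) : HasSum (fun i => ‖f i‖ ^ 2) (‖f‖ ^ 2) := by
  simpa using lp.hasSum_norm (p := 2) (by norm_num) f

namespace HilbertBasis

variable {ι 𝕜 H : Type*} [RCLike 𝕜] [NormedAddCommGroup H] [InnerProductSpace 𝕜 H]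
  (e : HilbertBasis ι 𝕜 H)

theorem summable_smul_of_memℓp {f : ι → 𝕜} (hf : Memℓp f 2) : Summable fun i => f i • e i :=
  (e.hasSum_repr_symm ⟨f, hf⟩).summable

theorem norm_tsum_smul_sq {f : ι → 𝕜} (hf : Memℓp f 2) :
    ‖∑' i, f i • e i‖ ^ 2 = ∑' i, ‖f i‖ ^ 2 := by
  rw [(e.hasSum_repr_symm ⟨f, hf⟩).tsum_eq, LinearIsometryEquiv.norm_map]
  exact (lp.hasSum_norm_sq ⟨f, hf⟩).tsum_eq.symm

variable {C : ℝ}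

theorem summable_mul_repr_smul {c : ι → 𝕜} (hc : ∀ i, ‖c i‖ ≤ C) (y : H) :
    Summable fun i => (c i * e.repr y i) • e i :=
  e.summable_smul_of_memℓp ((e.repr y).2.mul_of_forall_norm_le hc)

theorem norm_tsum_mul_repr_smul_sub_sq {c : ι → 𝕜} (hc : ∀ i, ‖c i‖ ≤ C) (y : H) :
    ‖∑' i, (c i * e.repr y i) • e i - y‖ ^ 2 = ∑' i, ‖c i - 1‖ ^ 2 * ‖e.repr y i‖ ^ 2 := by
  have hc' : ∀ i, ‖c i - 1‖ ≤ C + 1 := fun i => (norm_sub_le _ _).trans (by simp [hc i])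
  have hdiff : ∑' i, (c i * e.repr y i) • e i - y = ∑' i, ((c i - 1) * e.repr y i) • e i := by
    rw [← ((e.summable_mul_repr_smul hc y).hasSum.sub (e.hasSum_repr y)).tsum_eq]
    simp only [sub_mul, one_mul, sub_smul]
  rw [hdiff, e.norm_tsum_smul_sq ((e.repr y).2.mul_of_forall_norm_le hc')]
  simp only [norm_mul, mul_pow]

theorem tendsto_tsum_mul_repr_smul {α : Type*} {l : Filter α} {c : α → ι → 𝕜}
    (hC : ∀ n i, ‖c n i‖ ≤ C) (hc : ∀ i, Tendsto (c · i) l (𝓝 1)) (y : H) :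
    Tendsto (fun n => ∑' i, (c n i * e.repr y i) • e i) l (𝓝 y) := by
  have hbound : ∀ n i, ‖‖c n i - 1‖ ^ 2 * ‖e.repr y i‖ ^ 2‖ ≤ (C + 1) ^ 2 * ‖e.repr y i‖ ^ 2 := by
    intro n i
    rw [Real.norm_of_nonneg (by positivity)]
    gcongr
    exact (norm_sub_le _ _).trans (by simp [hC n i])
  have hsq : Tendsto (fun n => ‖∑' i, (c n i * e.repr y i) • e i - y‖ ^ 2) l (𝓝 0) := by
    simp only [e.norm_tsum_mul_repr_smul_sub_sq (hC _) y]
    simpa using tendsto_tsum_of_dominated_convergence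
      ((lp.hasSum_norm_sq (e.repr y)).summable.mul_left ((C + 1) ^ 2))
      (fun i => ((((hc i).sub_const 1).norm.pow 2).mul_const (‖e.repr y i‖ ^ 2)))
      (Eventually.of_forall hbound)
  rw [tendsto_iff_norm_sub_tendsto_zero]
  simpa using hsq.sqrt

end HilbertBasis

theorem norm_sq_div_sq_add_le_one (s : ℝ) {a : ℝ} (ha : 0 ≤ a) : ‖s ^ 2 / (s ^ 2 + a)‖ ≤ 1 := by
  rw [Real.norm_of_nonneg (by positivity)]
  exact div_le_one_of_le₀ (le_add_of_nonneg_right ha) (by positivity)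

theorem tendsto_sq_div_sq_add_nhds_one {α : Type*} {l : Filter α} {s : ℝ} (hs : s ≠ 0)
    {a : α → ℝ} (ha : Tendsto a l (𝓝 0)) : Tendsto (fun n => s ^ 2 / (s ^ 2 + a n)) l (𝓝 1) := by
  have hs2 : s ^ 2 ≠ 0 := pow_ne_zero 2 hs
  have h := (tendsto_const_nhds (x := s ^ 2)).div (tendsto_const_nhds.add ha) (by rwa [add_zero])
  rwa [add_zero, div_self hs2] at h

theorem tikhonov_regularized_inverse_converges_general
    {H : Type*} [NormedAddCommGroup H] [InnerProductSpace ℝ H]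
    (Γ : H →L[ℝ] H)
    (hsa : ∀ x y : H, ⟪Γ x, y⟫_ℝ = ⟪x, Γ y⟫_ℝ)
    (e : HilbertBasis ℕ ℝ H) (lam : ℕ → ℝ)
    (heig : ∀ l, Γ (e l) = lam l • e l) (hlam : ∀ l, 0 < lam l)
    (α : ℕ → ℝ) (hα : ∀ n, 0 < α n)
    (hα0 : Tendsto α atTop (𝓝 0))
    (x y : H) (hy : Γ y = x) :
    (∀ n : ℕ, Summable fun l : ℕ => ((lam l / (lam l ^ 2 + α n)) * ⟪x, e l⟫_ℝ) • (e l : H)) ∧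
    Tendsto (fun n : ℕ => ∑' l : ℕ, ((lam l / (lam l ^ 2 + α n)) * ⟪x, e l⟫_ℝ) • (e l : H))
      atTop (𝓝 y) := by
  have hcoeff : ∀ n l, (lam l / (lam l ^ 2 + α n)) * ⟪x, e l⟫_ℝ
      = lam l ^ 2 / (lam l ^ 2 + α n) * e.repr y l := by
    intro n l
    rw [e.repr_apply_apply, ← hy, hsa, heig, real_inner_smul_right, real_inner_comm]
    ring
  simp only [hcoeff]
  exact ⟨fun n => e.summable_mul_repr_smul (fun l => norm_sq_div_sq_add_le_one _ (hα n).le) y,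
    e.tendsto_tsum_mul_repr_smul (fun n l => norm_sq_div_sq_add_le_one _ (hα n).le)
      (fun l => tendsto_sq_div_sq_add_nhds_one (hlam l).ne' hα0) y⟩

/-- convergence of the Tikhonov regularized inverse: for `x` in the range of
`Γ` with `Γ y = x` and `α_n ↓ 0`, each series `Σ_l (λ_l/(λ_l² + α_n)) ⟪x, e_l⟫ e_l` converges
in `H` and its sum tends to `y = Γ⁻¹ x`. -/
theorem tikhonov_regularized_inverse_converges
    {H : Type*} [NormedAddCommGroup H] [InnerProductSpace ℝ H] [CompleteSpace H]
    (Γ : H →L[ℝ] H) (hcomp : IsCompactOperator Γ)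
    (hsa : ∀ x y : H, ⟪Γ x, y⟫_ℝ = ⟪x, Γ y⟫_ℝ)
    (hpos : ∀ x : H, 0 ≤ ⟪Γ x, x⟫_ℝ)
    (hinj : Function.Injective Γ)
    (e : HilbertBasis ℕ ℝ H) (lam : ℕ → ℝ)
    (heig : ∀ l, Γ (e l) = lam l • e l) (hlam : ∀ l, 0 < lam l)
    (α : ℕ → ℝ) (hα : ∀ n, 0 < α n) (hαmono : Antitone α)
    (hα0 : Tendsto α atTop (𝓝 0))
    (x y : H) (hy : Γ y = x) :
    (∀ n : ℕ, Summable fun l : ℕ => ((lam l / (lam l ^ 2 + α n)) * ⟪x, e l⟫_ℝ) • (e l : H)) ∧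
    Tendsto (fun n : ℕ => ∑' l : ℕ, ((lam l / (lam l ^ 2 + α n)) * ⟪x, e l⟫_ℝ) • (e l : H))
      atTop (𝓝 y) :=
  tikhonov_regularized_inverse_converges_general Γ hsa e lam heig hlam α hα hα0 x y hy
end
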